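/- On (ℂ²)^{⊗3} let S₁ = Z⊗Z⊗I, S₂ = I⊗Z⊗Z, C₁ = I⊗X⊗I, C₂ = I⊗I⊗X, and define the CPTP maps Φ_k(ρ) = A_{+,k} ρ A_{+,k}* + A_{−,k} ρ A_{−,k}* with A_{+,k} = (1+S_k)/2, A_{−,k} = C_k(1−S_k)/2, and Φ_P = Φ₂ ∘ Φ₁. Let V : ℂ² → (ℂ²)^{⊗3} be the isometry with V|0⟩ = |000⟩ and V|1⟩ = |111⟩, and let X̄ = X⊗X⊗X, Z̄ = Z⊗I⊗I. Then for every density operator ρ_L on ℂ² (on the first qubit) and every density operator σ on (ℂ²)^{⊗2} (on qubits 2 and 3): (i) the equalities tr( X̄^i Z̄^j Φ_P(ρ_L ⊗ σ) ) = tr( X^i Z^j ρ_L ) hold for all i, j ∈ {0,1} and all densities ρ_L if and only if tr( (X⊗X) σ ) = 1; and (ii) if (X⊗X)σ = σ, then Φ_P(ρ_L ⊗ σ) = V ρ_L V*. -/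

import Mathlib

open Matrix Kronecker
open scoped ComplexOrder

noncomputable section

/-- A density operator: positive semidefinite with trace 1. -/
def IsDensity {n : Type*} [Fintype n] (ρ : Matrix n n ℂ) : Prop :=
  ρ.PosSemidef ∧ ρ.trace = 1

/-- The Kraus operator `A₊ = (1 + S)/2`. -/
def Apl {n : Type*} [Fintype n] [DecidableEq n] (S : Matrix n n ℂ) : Matrix n n ℂ :=
  (2:ℂ)⁻¹ • (1 + S)

/-- The Kraus operator `A₋ = C (1 - S)/2`. -/
def Ami {n : Type*} [Fintype n] [DecidableEq n] (C S : Matrix n n ℂ) : Matrix n n ℂ :=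
  C * ((2:ℂ)⁻¹ • (1 - S))

/-- The CPTP map `Φ(ρ) = A₊ ρ A₊ᴴ + A₋ ρ A₋ᴴ` of a stabilizer/correction pair. -/
def encMap {n : Type*} [Fintype n] [DecidableEq n] (S C : Matrix n n ℂ)
    (ρ : Matrix n n ℂ) : Matrix n n ℂ :=
  Apl S * ρ * (Apl S)ᴴ + Ami C S * ρ * (Ami C S)ᴴ

/-- Apply a list of maps in order (head first). -/
def seqApply {M : Type*} (fs : List (M → M)) (ρ : M) : M :=
  fs.foldl (fun a f => f a) ρ

/-- Pauli `X`. -/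
def Xm : Matrix (Fin 2) (Fin 2) ℂ := !![0, 1; 1, 0]

/-- Pauli `Z`. -/
def Zm : Matrix (Fin 2) (Fin 2) ℂ := !![1, 0; 0, -1]

/-- Three-qubit index type. -/
abbrev Q3 := Fin 2 × (Fin 2 × Fin 2)

/-- `S₁ = Z⊗Z⊗I`. -/
def S1 : Matrix Q3 Q3 ℂ := Zm ⊗ₖ (Zm ⊗ₖ (1 : Matrix (Fin 2) (Fin 2) ℂ))

/-- `S₂ = I⊗Z⊗Z`. -/
def S2 : Matrix Q3 Q3 ℂ := (1 : Matrix (Fin 2) (Fin 2) ℂ) ⊗ₖ (Zm ⊗ₖ Zm)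

/-- `C₁ = I⊗X⊗I`. -/
def C1 : Matrix Q3 Q3 ℂ := (1 : Matrix (Fin 2) (Fin 2) ℂ) ⊗ₖ (Xm ⊗ₖ (1 : Matrix (Fin 2) (Fin 2) ℂ))

/-- `C₂ = I⊗I⊗X`. -/
def C2 : Matrix Q3 Q3 ℂ := (1 : Matrix (Fin 2) (Fin 2) ℂ) ⊗ₖ ((1 : Matrix (Fin 2) (Fin 2) ℂ) ⊗ₖ Xm)

/-- The logical operator `X̄ = X⊗X⊗X`. -/
def Xbar : Matrix Q3 Q3 ℂ := Xm ⊗ₖ (Xm ⊗ₖ Xm)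

/-- The logical operator `Z̄ = Z⊗I⊗I`. -/
def Zbar : Matrix Q3 Q3 ℂ := Zm ⊗ₖ ((1 : Matrix (Fin 2) (Fin 2) ℂ) ⊗ₖ (1 : Matrix (Fin 2) (Fin 2) ℂ))

/-- The isometry with `V|0⟩ = |000⟩` and `V|1⟩ = |111⟩`. -/
def Viso : Matrix Q3 (Fin 2) ℂ :=
  Matrix.of fun x j =>
    if (j = 0 ∧ x = ((0 : Fin 2), ((0 : Fin 2), (0 : Fin 2)))) ∨
       (j = 1 ∧ x = ((1 : Fin 2), ((1 : Fin 2), (1 : Fin 2)))) then 1 else 0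

/-- The finite-time dissipative encoder `Φ_P = Φ₂ ∘ Φ₁` for the repetition code. -/
def PhiP (ρ : Matrix Q3 Q3 ℂ) : Matrix Q3 Q3 ℂ :=
  encMap S2 C2 (encMap S1 C1 ρ)

lemma fin2_eq_add_one_iff : ∀ a b : Fin 2, (a = b + 1) ↔ ¬ a = b := by decide

lemma Apl1 : Apl S1 = Matrix.of (fun x y : Q3 =>
    if y = x then (if x.1 = x.2.1 then 1 else 0) else 0) := by
  ext ⟨a, b, c⟩ ⟨d, e, f⟩
  fin_cases a <;> fin_cases b <;> fin_cases c <;> fin_cases d <;> fin_cases e <;> fin_cases f <;>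
    simp [Apl, S1, Matrix.one_apply, Zm, Prod.ext_iff] <;> norm_num

lemma C1e : C1 = Matrix.of (fun x y : Q3 =>
    if y = (x.1, (x.2.1 + 1, x.2.2)) then 1 else 0) := by
  ext ⟨a, b, c⟩ ⟨d, e, f⟩
  fin_cases a <;> fin_cases b <;> fin_cases c <;> fin_cases d <;> fin_cases e <;> fin_cases f <;>
    simp [C1, Matrix.one_apply, Xm, Prod.ext_iff] <;> norm_num

lemma P1e : (2:ℂ)⁻¹ • ((1 : Matrix Q3 Q3 ℂ) - S1) = Matrix.of (fun x y : Q3 =>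
    if x.1 = x.2.1 then 0 else (if y = x then 1 else 0)) := by
  ext ⟨a, b, c⟩ ⟨d, e, f⟩
  fin_cases a <;> fin_cases b <;> fin_cases c <;> fin_cases d <;> fin_cases e <;> fin_cases f <;>
    simp [S1, Matrix.one_apply, Zm, Prod.ext_iff] <;> norm_num

lemma Ami1 : Ami C1 S1 = Matrix.of (fun x y : Q3 =>
    if y = (x.1, (x.2.1 + 1, x.2.2)) then (if x.1 = x.2.1 then 1 else 0) else 0) := by
  rw [Ami, C1e, P1e]
  ext x y
  rw [Matrix.mul_apply, Finset.sum_eq_single ((x.1, (x.2.1 + 1, x.2.2)) : Q3)]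
  · by_cases h : x.1 = x.2.1 <;> simp [fin2_eq_add_one_iff, h]
  · intro b _ hb; simp [Matrix.of_apply, hb]
  · intro h; exact absurd (Finset.mem_univ _) h

lemma enc1_eq (ρ : Matrix Q3 Q3 ℂ) : encMap S1 C1 ρ = Matrix.of (fun x y =>
    if x.1 = x.2.1 ∧ y.1 = y.2.1
    then ρ x y + ρ (x.1, (x.2.1 + 1, x.2.2)) (y.1, (y.2.1 + 1, y.2.2)) else 0) := by
  rw [encMap, Apl1, Ami1]
  ext x y
  by_cases hx : x.1 = x.2.1 <;> by_cases hy : y.1 = y.2.1 <;>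
    simp [Matrix.mul_apply, Matrix.conjTranspose_apply, hx, hy, Finset.sum_ite_eq',
      Matrix.of_apply, apply_ite (starRingEnd ℂ)]

lemma Apl2 : Apl S2 = Matrix.of (fun x y : Q3 =>
    if y = x then (if x.2.1 = x.2.2 then 1 else 0) else 0) := by
  ext ⟨a, b, c⟩ ⟨d, e, f⟩
  fin_cases a <;> fin_cases b <;> fin_cases c <;> fin_cases d <;> fin_cases e <;> fin_cases f <;>
    simp [Apl, S2, Matrix.one_apply, Zm, Prod.ext_iff] <;> norm_num

lemma C2e : C2 = Matrix.of (fun x y : Q3 =>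
    if y = (x.1, (x.2.1, x.2.2 + 1)) then 1 else 0) := by
  ext ⟨a, b, c⟩ ⟨d, e, f⟩
  fin_cases a <;> fin_cases b <;> fin_cases c <;> fin_cases d <;> fin_cases e <;> fin_cases f <;>
    simp [C2, Matrix.one_apply, Xm, Prod.ext_iff] <;> norm_num

lemma P2e : (2:ℂ)⁻¹ • ((1 : Matrix Q3 Q3 ℂ) - S2) = Matrix.of (fun x y : Q3 =>
    if x.2.1 = x.2.2 then 0 else (if y = x then 1 else 0)) := by
  ext ⟨a, b, c⟩ ⟨d, e, f⟩
  fin_cases a <;> fin_cases b <;> fin_cases c <;> fin_cases d <;> fin_cases e <;> fin_cases f <;>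
    simp [S2, Matrix.one_apply, Zm, Prod.ext_iff] <;> norm_num

lemma Ami2 : Ami C2 S2 = Matrix.of (fun x y : Q3 =>
    if y = (x.1, (x.2.1, x.2.2 + 1)) then (if x.2.1 = x.2.2 then 1 else 0) else 0) := by
  rw [Ami, C2e, P2e]
  ext x y
  rw [Matrix.mul_apply, Finset.sum_eq_single ((x.1, (x.2.1, x.2.2 + 1)) : Q3)]
  · by_cases h : x.2.1 = x.2.2 <;> simp [fin2_eq_add_one_iff, h]
  · intro b _ hb; simp [Matrix.of_apply, hb]
  · intro h; exact absurd (Finset.mem_univ _) h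

lemma enc2_eq (ρ : Matrix Q3 Q3 ℂ) : encMap S2 C2 ρ = Matrix.of (fun x y =>
    if x.2.1 = x.2.2 ∧ y.2.1 = y.2.2
    then ρ x y + ρ (x.1, (x.2.1, x.2.2 + 1)) (y.1, (y.2.1, y.2.2 + 1)) else 0) := by
  rw [encMap, Apl2, Ami2]
  ext x y
  by_cases hx : x.2.1 = x.2.2 <;> by_cases hy : y.2.1 = y.2.2 <;>
    simp [Matrix.mul_apply, Matrix.conjTranspose_apply, hx, hy, Finset.sum_ite_eq',
      Matrix.of_apply, apply_ite (starRingEnd ℂ)]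

lemma phiP_kron (ρ : Matrix (Fin 2) (Fin 2) ℂ) (σ : Matrix (Fin 2 × Fin 2) (Fin 2 × Fin 2) ℂ) :
    PhiP (ρ ⊗ₖ σ) = Matrix.of (fun x y : Q3 =>
      if (x.1 = x.2.1 ∧ x.2.1 = x.2.2) ∧ (y.1 = y.2.1 ∧ y.2.1 = y.2.2) then
        ρ x.1 y.1 * (σ x.2 y.2 + σ (x.2.1 + 1, x.2.2) (y.2.1 + 1, y.2.2)
          + σ (x.2.1, x.2.2 + 1) (y.2.1, y.2.2 + 1)
          + σ (x.2.1 + 1, x.2.2 + 1) (y.2.1 + 1, y.2.2 + 1))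
      else 0) := by
  rw [PhiP, enc1_eq, enc2_eq]
  ext x y
  by_cases h1 : x.1 = x.2.1 <;> by_cases h2 : x.2.1 = x.2.2 <;>
  by_cases h3 : y.1 = y.2.1 <;> by_cases h4 : y.2.1 = y.2.2 <;>
    simp [Matrix.of_apply, Matrix.kroneckerMap_apply, h1, h2, h3, h4]
  all_goals try simp_all
  all_goals try ring

lemma Xbar_e : Xbar = Matrix.of (fun x y : Q3 =>
    if y = (x.1 + 1, (x.2.1 + 1, x.2.2 + 1)) then 1 else 0) := by
  ext ⟨a, b, c⟩ ⟨d, e, f⟩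
  fin_cases a <;> fin_cases b <;> fin_cases c <;> fin_cases d <;> fin_cases e <;> fin_cases f <;>
    simp [Xbar, Xm, Prod.ext_iff] <;> norm_num

lemma Zbar_e : Zbar = Matrix.of (fun x y : Q3 =>
    if y = x then (if x.1 = 0 then 1 else -1) else 0) := by
  ext ⟨a, b, c⟩ ⟨d, e, f⟩
  fin_cases a <;> fin_cases b <;> fin_cases c <;> fin_cases d <;> fin_cases e <;> fin_cases f <;>
    simp [Zbar, Zm, Matrix.one_apply, Prod.ext_iff] <;> norm_num

lemma T00 (ρ : Matrix (Fin 2) (Fin 2) ℂ) (σ : Matrix (Fin 2 × Fin 2) (Fin 2 × Fin 2) ℂ) :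
    (PhiP (ρ ⊗ₖ σ)).trace = ρ.trace * σ.trace := by
  rw [phiP_kron]
  simp [Matrix.trace, Matrix.diag, Matrix.of_apply, Fintype.sum_prod_type, Fin.sum_univ_two]
  ring

lemma T01 (ρ : Matrix (Fin 2) (Fin 2) ℂ) (σ : Matrix (Fin 2 × Fin 2) (Fin 2 × Fin 2) ℂ) :
    (Zbar * PhiP (ρ ⊗ₖ σ)).trace = (Zm * ρ).trace * σ.trace := by
  rw [phiP_kron, Zbar_e]
  simp [Matrix.trace, Matrix.diag, Matrix.mul_apply, Matrix.of_apply, ite_mul, one_mul, zero_mul,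
    Finset.sum_ite_eq', Fintype.sum_prod_type, Fin.sum_univ_two, Zm]
  ring

lemma T10 (ρ : Matrix (Fin 2) (Fin 2) ℂ) (σ : Matrix (Fin 2 × Fin 2) (Fin 2 × Fin 2) ℂ) :
    (Xbar * PhiP (ρ ⊗ₖ σ)).trace = (Xm * ρ).trace * ((Xm ⊗ₖ Xm) * σ).trace := by
  rw [phiP_kron, Xbar_e]
  simp [Matrix.trace, Matrix.diag, Matrix.mul_apply, Matrix.of_apply, ite_mul, one_mul, zero_mul,
    Finset.sum_ite_eq', Fintype.sum_prod_type, Fin.sum_univ_two, Matrix.kroneckerMap_apply, Xm]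
  ring

lemma T11 (ρ : Matrix (Fin 2) (Fin 2) ℂ) (σ : Matrix (Fin 2 × Fin 2) (Fin 2 × Fin 2) ℂ) :
    (Xbar * Zbar * PhiP (ρ ⊗ₖ σ)).trace = (Xm * Zm * ρ).trace * ((Xm ⊗ₖ Xm) * σ).trace := by
  rw [phiP_kron, Zbar_e, Xbar_e]
  simp [Matrix.trace, Matrix.diag, Matrix.mul_apply, Matrix.of_apply, ite_mul, mul_ite, one_mul,
    zero_mul, mul_zero, mul_one, Finset.sum_ite_eq', Fintype.sum_prod_type, Fin.sum_univ_two,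
    Matrix.kroneckerMap_apply, Xm, Zm]
  ring

set_option maxHeartbeats 2000000 in
lemma part2 (ρL : Matrix (Fin 2) (Fin 2) ℂ) (σ : Matrix (Fin 2 × Fin 2) (Fin 2 × Fin 2) ℂ)
    (hσtr : σ.trace = 1) (h : (Xm ⊗ₖ Xm) * σ = σ) :
    PhiP (ρL ⊗ₖ σ) = Viso * ρL * Visoᴴ := by
  have e1 : ∀ p, σ ((1:Fin 2),(1:Fin 2)) p = σ ((0:Fin 2),(0:Fin 2)) p := by
    intro p
    have h2 := congrFun (congrFun h ((1:Fin 2),(1:Fin 2))) p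
    simp [Matrix.mul_apply, Matrix.kroneckerMap_apply, Fintype.sum_prod_type,
      Fin.sum_univ_two, Xm, -Prod.mk_zero_zero, -Prod.mk_one_one] at h2
    exact h2.symm
  have e2 : ∀ p, σ ((1:Fin 2),(0:Fin 2)) p = σ ((0:Fin 2),(1:Fin 2)) p := by
    intro p
    have h2 := congrFun (congrFun h ((1:Fin 2),(0:Fin 2))) p
    simp [Matrix.mul_apply, Matrix.kroneckerMap_apply, Fintype.sum_prod_type,
      Fin.sum_univ_two, Xm, -Prod.mk_zero_zero, -Prod.mk_one_one] at h2
    exact h2.symm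
  have htr : σ ((0:Fin 2),(0:Fin 2)) ((0:Fin 2),(0:Fin 2)) + σ ((0:Fin 2),(1:Fin 2)) ((0:Fin 2),(1:Fin 2))
      + σ ((0:Fin 2),(1:Fin 2)) ((1:Fin 2),(0:Fin 2)) + σ ((0:Fin 2),(0:Fin 2)) ((1:Fin 2),(1:Fin 2)) = 1 := by
    rw [Matrix.trace] at hσtr
    simp [Matrix.diag, Fintype.sum_prod_type, Fin.sum_univ_two, e1, e2,
      -Prod.mk_zero_zero, -Prod.mk_one_one] at hσtr
    linear_combination hσtr
  rw [phiP_kron]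
  ext ⟨a, b, c⟩ ⟨d, e, f⟩
  fin_cases a <;> fin_cases b <;> fin_cases c <;> fin_cases d <;> fin_cases e <;> fin_cases f <;>
    simp [Viso, Matrix.mul_apply, Matrix.conjTranspose_apply, Fin.sum_univ_two,
      Matrix.of_apply, Prod.ext_iff, e1, e2, -Prod.mk_zero_zero, -Prod.mk_one_one] <;>
    first
      | linear_combination (ρL 0 0) * htr
      | linear_combination (ρL 0 1) * htr
      | linear_combination (ρL 1 0) * htr
      | linear_combination (ρL 1 1) * htr


lemma plusDensity : IsDensity (!![2⁻¹, 2⁻¹; 2⁻¹, 2⁻¹] : Matrix (Fin 2) (Fin 2) ℂ) := by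
  constructor
  · have hM : (!![2⁻¹, 2⁻¹; 2⁻¹, 2⁻¹] : Matrix (Fin 2) (Fin 2) ℂ)
        = (!![2⁻¹, 2⁻¹; 2⁻¹, 2⁻¹] : Matrix (Fin 2) (Fin 2) ℂ)ᴴ
          * !![2⁻¹, 2⁻¹; 2⁻¹, 2⁻¹] := by
      ext i j
      fin_cases i <;> fin_cases j <;>
        simp [Matrix.mul_apply, Fin.sum_univ_two, Matrix.conjTranspose_apply, map_ofNat] <;> norm_num
    rw [hM]
    exact Matrix.posSemidef_conjTranspose_mul_self _
  · simp [Matrix.trace, Matrix.diag, Fin.sum_univ_two]; norm_num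

lemma traceXplus : (Xm * !![2⁻¹, 2⁻¹; 2⁻¹, 2⁻¹]).trace = 1 := by
  simp [Matrix.trace, Matrix.diag, Matrix.mul_apply, Fin.sum_univ_two, Xm]; norm_num


/-- the dissipative encoder for the 3-qubit repetition code
encodes correctly exactly on co-factor states `σ` with `tr((X⊗X)σ) = 1`, and
on such (invariant) states it realizes the isometric encoding `ρ ↦ V ρ Vᴴ`. -/
theorem stmt11 :
    (∀ σ : Matrix (Fin 2 × Fin 2) (Fin 2 × Fin 2) ℂ, IsDensity σ →
      ((∀ i j : Fin 2, ∀ ρL : Matrix (Fin 2) (Fin 2) ℂ, IsDensity ρL →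
          (Xbar ^ (i : ℕ) * Zbar ^ (j : ℕ) * PhiP (ρL ⊗ₖ σ)).trace
            = (Xm ^ (i : ℕ) * Zm ^ (j : ℕ) * ρL).trace)
        ↔ ((Xm ⊗ₖ Xm) * σ).trace = 1)) ∧
    (∀ (ρL : Matrix (Fin 2) (Fin 2) ℂ) (σ : Matrix (Fin 2 × Fin 2) (Fin 2 × Fin 2) ℂ),
      IsDensity ρL → IsDensity σ → (Xm ⊗ₖ Xm) * σ = σ →
      PhiP (ρL ⊗ₖ σ) = Viso * ρL * Visoᴴ) := by
  constructor
  · intro σ hσ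
    constructor
    · intro hall
      have h1 := hall 1 0 !![2⁻¹, 2⁻¹; 2⁻¹, 2⁻¹] plusDensity
      simp only [Fin.isValue, Fin.val_one, Fin.val_zero, pow_one, pow_zero, mul_one] at h1
      rw [T10, traceXplus, one_mul] at h1
      exact h1
    · intro h i j ρL hρ
      fin_cases i <;> fin_cases j <;>
        simp only [Fin.isValue, Fin.val_one, Fin.val_zero, pow_one, pow_zero,
          mul_one, one_mul, Fin.mk_one, Fin.zero_eta]
      · rw [T00, hρ.2, hσ.2, mul_one]
      · rw [T01, hσ.2, mul_one]
      · rw [T10, h, mul_one]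
      · rw [T11, h, mul_one]
  · intro ρL σ _ hσ hXX
    exact part2 ρL σ hσ.2 hXX
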